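/- Let S be a successor, a = λx λy λz ((x)(z)(x)I I λx 0̄)λx(S)(z)x, b = λx λy λz (z)x, and define Q₀ = S, Q_{k+1} = λx (S)(Q_k)x, P₀ = 0̄, and P_{k+1} = (Q_k)((a)^{n−k−1}b) I I λx 0̄ for 0 ≤ k ≤ n−1. Then for every n ≥ 1 and every 0 ≤ k ≤ n, ((a)^n b) 0̄ S f ≻ ((a)^{n−k} b) P_k Q_k f; in particular, for k = n, ((a)^n b) 0̄ S f ≻ (f)Pₙ. -/

import Mathlib

namespace SO

/-- Untyped λ-terms in de Bruijn notation (modulo α-equivalence). -/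
inductive Term : Type
  | var : ℕ → Term
  | lam : Term → Term
  | app : Term → Term → Term
deriving DecidableEq

namespace Term

/-- Shift the free variables `≥ c` up by one. -/
def lift (c : ℕ) : Term → Term
  | var i => if i < c then var i else var (i + 1)
  | lam t => lam (lift (c + 1) t)
  | app t u => app (lift c t) (lift c u)

/-- Substitute `s` for the free variable `j`. -/
def subst (j : ℕ) (s : Term) : Term → Term
  | var i => if i = j then s else if j < i then var (i - 1) else var i
  | lam t => lam (subst (j + 1) (lift 0 s) t)
  | app t u => app (subst j s t) (subst j s u)

/-- One step of β-reduction (anywhere in the term). -/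
inductive Beta : Term → Term → Prop
  | beta : Beta (app (lam t) u) (subst 0 u t)
  | appL : Beta t t' → Beta (app t u) (app t' u)
  | appR : Beta u u' → Beta (app t u) (app t u')
  | lam : Beta t t' → Beta (lam t) (lam t')

/-- β-equivalence `u ≃β v`. -/
def BetaEq : Term → Term → Prop := Relation.EqvGen Beta

/-- One step of head reduction: a term `λx₁…λxₙ (λx u)v w̄` reduces its head redex. -/
inductive HeadStep : Term → Term → Prop
  | beta : HeadStep (app (lam t) u) (subst 0 u t)
  | app : HeadStep (app t u) w → HeadStep (app (app t u) v) (app w v)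
  | lam : HeadStep t t' → HeadStep (lam t) (lam t')

/-- `u ≻ v` : `v` is obtained from `u` by finitely many head-reduction steps. -/
def HeadRed : Term → Term → Prop := Relation.ReflTransGen HeadStep

/-- Head normal form: no head-reduction step applies. -/
def IsHNF (t : Term) : Prop := ∀ u, ¬ HeadStep t u

/-- `t` is solvable iff the head reduction of `t` terminates. -/
def Solvable (t : Term) : Prop := ∃ u, HeadRed t u ∧ IsHNF u

/-- `FreeIn k t` : the variable (de Bruijn index) `k` occurs free in `t`. -/
def FreeIn (k : ℕ) : Term → Prop
  | var i => i = k
  | lam t => FreeIn (k + 1) t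
  | app t u => FreeIn k t ∨ FreeIn k u

/-- A term is closed iff it has no free variables. -/
def Closed (t : Term) : Prop := ∀ k, ¬ FreeIn k t

/-- `(u)^n v` : `u` applied `n` times to `v`. -/
def iterApp (u : Term) : ℕ → Term → Term
  | 0, v => v
  | n + 1, v => app u (iterApp u n v)

/-- The Church integer `n̄ = λf λx (f)^n x`. -/
def church (n : ℕ) : Term := lam (lam (iterApp (var 1) n (var 0)))

/-- A closed λ-term `S` is a successor iff `(S)k̄ ≃β (k+1)‾` for every `k`. -/
def IsSuccessor (S : Term) : Prop :=
  Closed S ∧ ∀ k : ℕ, BetaEq (app S (church k)) (church (k + 1))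

/-- A closed λ-term `T` is a storage operator iff for every `n ≥ 0` there is a closed
`τₙ ≃β n̄` such that for every `θₙ ≃β n̄` and fresh variable `f`,
`(T)θₙ f ≻ (f)τₙ`. -/
def IsStorageOp (T : Term) : Prop :=
  Closed T ∧ ∀ n : ℕ, ∃ τ : Term, Closed τ ∧ BetaEq τ (church n) ∧
    ∀ (θ : Term) (f : ℕ), BetaEq θ (church n) → ¬ FreeIn f θ →
      HeadRed (app (app T θ) (var f)) (app (var f) τ)

end Term

end SO

namespace SO
namespace Term

/-- `I = λx x`. -/
def Iop : Term := lam (var 0)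

/-- `a = λx λy λz ((x)(z)(x)I I λx 0̄)λx(S)(z)x` (de Bruijn notation). -/
def aOp (S : Term) : Term :=
  lam (lam (lam (app
    (app (var 2)
      (app (app (app (app (var 0) (var 2)) Iop) Iop) (lam (church 0))))
    (lam (app S (app (var 1) (var 0)))))))

/-- `b = λx λy λz (z)x` (de Bruijn notation). -/
def bOp : Term := lam (lam (lam (app (var 0) (var 2))))

/-- `T = λx (x) a b 0̄ S`. -/
def T3 (S : Term) : Term :=
  lam (app (app (app (app (var 0) (aOp S)) bOp) (church 0)) S)

end Term
end SO


namespace SO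
namespace Term

lemma lift_of_free {t : Term} : ∀ c : ℕ, (∀ k, c ≤ k → ¬ FreeIn k t) → lift c t = t := by
  induction t with
  | var i =>
    intro c h
    simp only [lift]
    rw [if_pos]
    by_contra hc
    exact h i (Nat.le_of_not_lt hc) rfl
  | lam t ih =>
    intro c h
    simp only [lift]
    rw [ih (c+1) (fun k hk => by
      obtain ⟨k', rfl⟩ := Nat.exists_eq_add_of_le hk
      have := h (c + k') (Nat.le_add_right _ _)
      simp only [FreeIn] at this; convert this using 2; omega)]
  | app t u iht ihu =>
    intro c h
    simp only [lift]
    rw [iht c (fun k hk hf => h k hk (Or.inl hf)), ihu c (fun k hk hf => h k hk (Or.inr hf))]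

lemma lift_closed {t : Term} (h : Closed t) (c : ℕ) : lift c t = t :=
  lift_of_free c (fun k _ => h k)

lemma subst_of_free {t : Term} : ∀ (j : ℕ) (s : Term), (∀ k, j ≤ k → ¬ FreeIn k t) → subst j s t = t := by
  induction t with
  | var i =>
    intro j s h
    simp only [subst]
    have h1 : ¬ i = j := fun e => h i (e ▸ le_refl j) rfl
    have h2 : ¬ j < i := fun e => h i (le_of_lt e) rfl
    simp [h1, h2]
  | lam t ih =>
    intro j s h
    simp only [subst]
    rw [ih (j+1) _ (fun k hk => by
      obtain ⟨k', rfl⟩ := Nat.exists_eq_add_of_le hk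
      have := h (j + k') (Nat.le_add_right _ _)
      simp only [FreeIn] at this; convert this using 2; omega)]
  | app t u iht ihu =>
    intro j s h
    simp only [subst]
    rw [iht j s (fun k hk hf => h k hk (Or.inl hf)), ihu j s (fun k hk hf => h k hk (Or.inr hf))]

lemma subst_closed {t : Term} (h : Closed t) (j : ℕ) (s : Term) : subst j s t = t :=
  subst_of_free j s (fun k _ => h k)

lemma closed_Iop : Closed Iop := by intro k; simp [Iop, FreeIn]
lemma closed_church (n : ℕ) : Closed (church n) := by
  intro k; simp only [church, FreeIn]
  induction n with
  | zero => simp [iterApp, FreeIn]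
  | succ n ih => simp [iterApp, FreeIn, ih]
lemma closed_bOp : Closed bOp := by intro k; simp [bOp, FreeIn]

lemma closed_app {t u : Term} (ht : Closed t) (hu : Closed u) : Closed (app t u) := by
  intro k hk; cases hk with
  | inl h => exact ht k h
  | inr h => exact hu k h

lemma closed_aOp {S : Term} (hS : Closed S) : Closed (aOp S) := by
  intro k
  have h1 := closed_church 0
  simp only [church] at h1
  simp [aOp, FreeIn, Iop, hS _, h1 _, closed_church 0 _]

lemma closed_iter {S : Term} (hS : Closed S) (m : ℕ) : Closed (iterApp (aOp S) m bOp) := by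
  induction m with
  | zero => exact closed_bOp
  | succ m ih => exact closed_app (closed_aOp hS) ih


lemma head_step {S X P Q v : Term} (hS : Closed S) (hX : Closed X) (hQ : Closed Q) :
    HeadRed (app (app (app (app (aOp S) X) P) Q) v)
      (app (app (app X (app (app (app (app Q X) Iop) Iop) (lam (church 0))))
        (lam (app S (app Q (var 0))))) v) := by
  have e1 : subst 0 X
      (lam (lam (app
        (app (var 2) (app (app (app (app (var 0) (var 2)) Iop) Iop) (lam (church 0))))
        (lam (app S (app (var 1) (var 0))))))) =
      lam (lam (app (app X (app (app (app (app (var 0) X) Iop) Iop) (lam (church 0))))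
        (lam (app S (app (var 1) (var 0)))))) := by
    simp [subst, lift, Iop, church, iterApp, lift_closed hX, subst_closed hS,
      subst_closed closed_Iop]
  have e2 : subst 0 P
      (lam (app (app X (app (app (app (app (var 0) X) Iop) Iop) (lam (church 0))))
        (lam (app S (app (var 1) (var 0)))))) =
      lam (app (app X (app (app (app (app (var 0) X) Iop) Iop) (lam (church 0))))
        (lam (app S (app (var 1) (var 0))))) := by
    simp [subst, lift, Iop, church, iterApp, subst_closed hS, subst_closed hX,
      subst_closed closed_Iop]
  have e3 : subst 0 Q
      (app (app X (app (app (app (app (var 0) X) Iop) Iop) (lam (church 0))))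
        (lam (app S (app (var 1) (var 0))))) =
      app (app X (app (app (app (app Q X) Iop) Iop) (lam (church 0))))
        (lam (app S (app Q (var 0)))) := by
    simp [subst, lift, Iop, church, iterApp, subst_closed hS, subst_closed hX,
      subst_closed closed_Iop, lift_closed hQ]
  have s1 : HeadStep (app (aOp S) X)
      (lam (lam (app (app X (app (app (app (app (var 0) X) Iop) Iop) (lam (church 0))))
        (lam (app S (app (var 1) (var 0))))))) := by
    rw [← e1]; exact HeadStep.beta
  have s2 : HeadStep
      (app (lam (lam (app (app X (app (app (app (app (var 0) X) Iop) Iop) (lam (church 0))))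
        (lam (app S (app (var 1) (var 0))))))) P)
      (lam (app (app X (app (app (app (app (var 0) X) Iop) Iop) (lam (church 0))))
        (lam (app S (app (var 1) (var 0)))))) := by
    nth_rewrite 2 [← e2]; exact HeadStep.beta
  have s3 : HeadStep
      (app (lam (app (app X (app (app (app (app (var 0) X) Iop) Iop) (lam (church 0))))
        (lam (app S (app (var 1) (var 0)))))) Q)
      (app (app X (app (app (app (app Q X) Iop) Iop) (lam (church 0))))
        (lam (app S (app Q (var 0))))) := by
    rw [← e3]; exact HeadStep.beta
  exact Relation.ReflTransGen.head (HeadStep.app (HeadStep.app (HeadStep.app s1)))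
    (Relation.ReflTransGen.head (HeadStep.app (HeadStep.app s2))
      (Relation.ReflTransGen.head (HeadStep.app s3) Relation.ReflTransGen.refl))

lemma head_step_b {P Q v : Term} (hP : Closed P) :
    HeadRed (app (app (app bOp P) Q) v) (app v P) := by
  have e1 : subst 0 P (lam (lam (app (var 0) (var 2)))) = lam (lam (app (var 0) P)) := by
    simp [subst, lift, lift_closed hP]
  have e2 : subst 0 Q (lam (app (var 0) P)) = lam (app (var 0) P) := by
    simp [subst, lift, subst_closed hP]
  have e3 : subst 0 v (app (var 0) P) = app v P := by
    simp [subst, subst_closed hP]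
  have s1 : HeadStep (app bOp P) (lam (lam (app (var 0) P))) := by
    rw [← e1]; exact HeadStep.beta
  have s2 : HeadStep (app (lam (lam (app (var 0) P))) Q) (lam (app (var 0) P)) := by
    nth_rewrite 2 [← e2]; exact HeadStep.beta
  have s3 : HeadStep (app (lam (app (var 0) P)) v) (app v P) := by
    rw [← e3]; exact HeadStep.beta
  exact Relation.ReflTransGen.head (HeadStep.app (HeadStep.app s1))
    (Relation.ReflTransGen.head (HeadStep.app s2)
      (Relation.ReflTransGen.head s3 Relation.ReflTransGen.refl))
end Term
end SO

open SO Term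

/-- Let `S` be a successor, `a = λx λy λz ((x)(z)(x)I I λx 0̄)λx(S)(z)x`,
`b = λx λy λz (z)x`, and define `Q₀ = S`, `Q_{k+1} = λx (S)(Q_k)x`, `P₀ = 0̄`,
`P_{k+1} = (Q_k)((a)^{n-k-1}b) I I λx 0̄` for `0 ≤ k ≤ n-1`.  Then for every `n ≥ 1`
and every `0 ≤ k ≤ n`, `((a)^n b) 0̄ S f ≻ ((a)^{n-k} b) P_k Q_k f`; in particular,
for `k = n`, `((a)^n b) 0̄ S f ≻ (f)Pₙ`. -/
theorem aOp_iter_headRed (S : SO.Term) (hS : IsSuccessor S) (n : ℕ) (hn : 1 ≤ n)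
    (Q P : ℕ → SO.Term)
    (hQ0 : Q 0 = S) (hQ : ∀ k, Q (k + 1) = lam (app S (app (Q k) (var 0))))
    (hP0 : P 0 = church 0)
    (hP : ∀ k, k ≤ n - 1 →
      P (k + 1) =
        app (app (app (app (Q k) (iterApp (aOp S) (n - k - 1) bOp)) Iop) Iop)
          (lam (church 0)))
    (f : ℕ) :
    (∀ k, k ≤ n →
      HeadRed (app (app (app (iterApp (aOp S) n bOp) (church 0)) S) (var f))
        (app (app (app (iterApp (aOp S) (n - k) bOp) (P k)) (Q k)) (var f))) ∧
    HeadRed (app (app (app (iterApp (aOp S) n bOp) (church 0)) S) (var f))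
      (app (var f) (P n)) := by
  have hSc : Closed S := hS.1
  have hQc : ∀ k, Closed (Q k) := by
    intro k
    induction k with
    | zero => rw [hQ0]; exact hSc
    | succ k ih =>
      rw [hQ k]
      intro m hm
      simp only [FreeIn] at hm
      rcases hm with h | h | h
      · exact hSc _ h
      · exact ih _ h
      · omega
  have hPc : ∀ k, k ≤ n → Closed (P k) := by
    intro k
    induction k with
    | zero => intro _; rw [hP0]; exact closed_church 0
    | succ k _ =>
      intro hk
      rw [hP k (by omega)]
      refine closed_app (closed_app (closed_app (closed_app (hQc k)
        (closed_iter hSc _)) closed_Iop) closed_Iop) ?_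
      intro m hm
      simp only [FreeIn] at hm
      exact closed_church 0 _ hm
  have main : ∀ k, k ≤ n →
      HeadRed (app (app (app (iterApp (aOp S) n bOp) (church 0)) S) (var f))
        (app (app (app (iterApp (aOp S) (n - k) bOp) (P k)) (Q k)) (var f)) := by
    intro k
    induction k with
    | zero =>
      intro _
      rw [hP0, hQ0, Nat.sub_zero]
      exact Relation.ReflTransGen.refl
    | succ k ih =>
      intro hk
      refine (ih (by omega)).trans ?_
      have hnk : n - k = (n - (k + 1)) + 1 := by omega
      rw [hnk, hQ k, hP k (by omega)]
      have hss : n - k - 1 = n - (k + 1) := by omega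
      rw [hss]
      simp only [iterApp]
      exact head_step hSc (closed_iter hSc _) (hQc k)
  refine ⟨main, ?_⟩
  have h := main n le_rfl
  rw [Nat.sub_self] at h
  simp only [iterApp] at h
  exact h.trans (head_step_b (hPc n le_rfl))
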